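/- For all s ≥ 1 and n ≥ 0, F_{sn}(x,y)³ = F_s(x,y)³ · ( C(n+2,3)_{F_s} + 2(−y)^s L_s(x,y) · C(n+1,3)_{F_s} + (−y)^{3s} · C(n,3)_{F_s} ), where C(m,3)_{F_s} = F_{sm}F_{s(m−1)}F_{s(m−2)}/(F_s F_{2s} F_{3s}) for m ≥ 3 and 0 otherwise (all arguments (x,y)). -/

import Mathlib

/-- Bivariate Fibonacci polynomials. -/
def bF {K : Type*} [Field K] (x y : K) : ℕ → K
  | 0 => 0
  | 1 => 1
  | n + 2 => x * bF x y (n + 1) + y * bF x y n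

/-- Bivariate Lucas polynomials. -/
def bL {K : Type*} [Field K] (x y : K) : ℕ → K
  | 0 => 2
  | 1 => x
  | n + 2 => x * bL x y (n + 1) + y * bL x y n

/-- The bivariate s-Fibopolynomial (equal to 0 when k > n, since F_0 = 0
appears in the numerator). -/
noncomputable def fibo {K : Type*} [Field K] (x y : K) (s n k : ℕ) : K :=
  (∏ i ∈ Finset.range k, bF x y (s * (n - i))) / ∏ i ∈ Finset.range k, bF x y (s * (i + 1))

/-- The field ℚ(x,y) of rational functions in two variables. -/
noncomputable abbrev RF2 : Type := FractionRing (MvPolynomial (Fin 2) ℚ)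

noncomputable def Xv : RF2 := algebraMap (MvPolynomial (Fin 2) ℚ) RF2 (MvPolynomial.X 0)
noncomputable def Yv : RF2 := algebraMap (MvPolynomial (Fin 2) ℚ) RF2 (MvPolynomial.X 1)

/-!
Put `G k = F_{sk}`, `P = L_s` and `Q = (-y)^s`. The addition formula and Cassini's identity give
`G (k + 2) = P G (k + 1) - Q G k`, with `G 0 = 0`; in particular `F_{2s} = P F_s` and
`F_{3s} = (P² - Q) F_s`. For every such sequence
`G (n+2) G (n+1) G n + 2QP G (n+1) G n G (n-1) + Q³ G n G (n-1) G (n-2) = P (P² - Q) G n ³`,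
a polynomial identity once everything is written in terms of `G (n-2)` and `G (n-1)`. Dividing by
`F_s F_{2s} F_{3s} = P (P² - Q) F_s³` gives the theorem. These denominators do not vanish in
`ℚ(x, y)` since `F_n(1, 1)` is the ordinary Fibonacci number.
-/

section Recurrence

variable {R : Type*} [CommRing R] {G : ℕ → R} {P Q : R}

theorem triple_products_eq_cube_of_recurrence (h0 : G 0 = 0)
    (hrec : ∀ k, G (k + 2) = P * G (k + 1) - Q * G k) (n : ℕ) :
    G (n + 2) * G (n + 1) * G n + 2 * Q * P * (G (n + 1) * G n * G (n - 1)) +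
        Q ^ 3 * (G n * G (n - 1) * G (n - 2)) =
      P * (P ^ 2 - Q) * G n ^ 3 := by
  match n with
  | 0 => simp [h0]
  | 1 => simp only [hrec, h0]; ring
  | k + 2 => simp only [hrec, Nat.reduceSubDiff, Nat.add_sub_cancel]; ring

end Recurrence

section Field

variable {K : Type*} [Field K] (x y : K)

theorem bF_add_two (n : ℕ) : bF x y (n + 2) = x * bF x y (n + 1) + y * bF x y n := rfl

theorem bL_add_two (n : ℕ) : bL x y (n + 2) = x * bL x y (n + 1) + y * bL x y n := rfl

theorem bF_add (m n : ℕ) :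
    bF x y (m + n + 1) = bF x y (m + 1) * bF x y (n + 1) + y * bF x y m * bF x y n := by
  induction n using Nat.twoStepInduction with
  | zero => simp [bF]
  | one => simp [bF]; ring
  | more n ih₁ ih₂ =>
    rw [show m + (n + 2) + 1 = m + n + 1 + 2 by ring, bF_add_two,
      show m + n + 1 + 1 = m + (n + 1) + 1 by ring, ih₁, ih₂, bF_add_two x y (n + 1),
      bF_add_two x y n]
    ring

theorem bL_succ (n : ℕ) : bL x y (n + 1) = bF x y (n + 2) + y * bF x y n := by
  induction n using Nat.twoStepInduction with
  | zero => simp [bL, bF]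
  | one => simp [bL, bF]; ring
  | more n ih₁ ih₂ =>
    rw [bL_add_two, ih₁, ih₂, bF_add_two x y (n + 2), bF_add_two x y (n + 1), bF_add_two x y n]
    ring

theorem bF_cassini (n : ℕ) : bF x y (n + 2) * bF x y n - bF x y (n + 1) ^ 2 = -(-y) ^ n := by
  induction n with
  | zero => simp [bF]
  | succ n ih =>
    rw [bF_add_two x y (n + 1)]
    linear_combination (-y) * ih - bF x y (n + 2) * bF_add_two x y n

theorem bF_add_two_mul (s m : ℕ) :
    bF x y (m + 2 * s) = bL x y s * bF x y (m + s) - (-y) ^ s * bF x y m := by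
  cases s with
  | zero => simp [bL]; ring
  | succ t =>
    rw [show m + 2 * (t + 1) = m + t + 1 + t + 1 by ring, show m + (t + 1) = m + t + 1 by ring,
      bF_add x y (m + t + 1) t, bL_succ,
      show m + t + 1 + 1 = m + (t + 1) + 1 by ring, bF_add x y m (t + 1),
      show t + 1 + 1 = t + 2 by rfl, bF_add x y m t]
    linear_combination (-y * bF x y m) * bF_cassini x y t

theorem bF_mul_add_two (s k : ℕ) :
    bF x y (s * (k + 2)) = bL x y s * bF x y (s * (k + 1)) - (-y) ^ s * bF x y (s * k) := by
  rw [show s * (k + 2) = s * k + 2 * s by ring, show s * (k + 1) = s * k + s by ring,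
    bF_add_two_mul]

theorem fibo_three (s m : ℕ) :
    fibo x y s m 3 = bF x y (s * m) * bF x y (s * (m - 1)) * bF x y (s * (m - 2)) /
      (bF x y s * bF x y (s * 2) * bF x y (s * 3)) := by
  simp [fibo, Finset.prod_range_succ]

theorem bF_mul_cube (s n : ℕ) (hD : bF x y s * bF x y (s * 2) * bF x y (s * 3) ≠ 0) :
    bF x y (s * n) ^ 3 =
      bF x y s ^ 3 *
        (fibo x y s (n + 2) 3 + 2 * (-y) ^ s * bL x y s * fibo x y s (n + 1) 3 +
          (-y) ^ (3 * s) * fibo x y s n 3) := by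
  have htriple := triple_products_eq_cube_of_recurrence (G := fun k => bF x y (s * k))
    (by simp [bF]) (bF_mul_add_two x y s) n
  have hden : bF x y s * bF x y (s * 2) * bF x y (s * 3) =
      bL x y s * (bL x y s ^ 2 - (-y) ^ s) * bF x y s ^ 3 := by
    have h₂ := bF_mul_add_two x y s 0
    have h₃ := bF_mul_add_two x y s 1
    simp only [mul_zero, zero_add, mul_one, bF, sub_zero, Nat.reduceAdd] at h₂ h₃
    rw [h₃, h₂]
    ring
  have hne : bL x y s * (bL x y s ^ 2 - (-y) ^ s) * bF x y s ^ 3 ≠ 0 := hden ▸ hD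
  simp only [fibo_three, Nat.reduceSubDiff, Nat.add_sub_cancel]
  calc bF x y (s * n) ^ 3
      = bF x y s ^ 3 * (bL x y s * (bL x y s ^ 2 - (-y) ^ s) * bF x y (s * n) ^ 3 /
          (bF x y s * bF x y (s * 2) * bF x y (s * 3))) := by
        rw [hden, ← mul_div_assoc, eq_div_iff hne]; ring
    _ = _ := by rw [← htriple, pow_mul']; ring

end Field

/-- `bF` over a commutative semiring, so that it can be transported along ring homomorphisms
out of `MvPolynomial (Fin 2) ℚ`, which is not a field. -/
def bivariateFib {R : Type*} [CommSemiring R] (x y : R) : ℕ → R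
  | 0 => 0
  | 1 => 1
  | n + 2 => x * bivariateFib x y (n + 1) + y * bivariateFib x y n

theorem map_bivariateFib {R S : Type*} [CommSemiring R] [CommSemiring S] (f : R →+* S)
    (x y : R) (n : ℕ) : f (bivariateFib x y n) = bivariateFib (f x) (f y) n := by
  induction n using Nat.twoStepInduction with
  | zero => simp [bivariateFib]
  | one => simp [bivariateFib]
  | more n ih₁ ih₂ => simp [bivariateFib, ih₁, ih₂]

theorem bivariateFib_eq_bF {K : Type*} [Field K] (x y : K) (n : ℕ) :
    bivariateFib x y n = bF x y n := by
  induction n using Nat.twoStepInduction with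
  | zero => rfl
  | one => rfl
  | more n ih₁ ih₂ => simp [bivariateFib, bF_add_two, ih₁, ih₂]

theorem bivariateFib_one_one {R : Type*} [CommSemiring R] (n : ℕ) :
    bivariateFib (1 : R) 1 n = Nat.fib n := by
  induction n using Nat.twoStepInduction with
  | zero => simp [bivariateFib]
  | one => simp [bivariateFib]
  | more n ih₁ ih₂ => simp [bivariateFib, ih₁, ih₂, Nat.fib_add_two, add_comm]

theorem bF_Xv_Yv_ne_zero {n : ℕ} (hn : n ≠ 0) : bF Xv Yv n ≠ 0 := by
  have hmap : bF Xv Yv n = algebraMap _ RF2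
      (bivariateFib (MvPolynomial.X 0 : MvPolynomial (Fin 2) ℚ) (MvPolynomial.X 1) n) := by
    rw [map_bivariateFib, bivariateFib_eq_bF]; rfl
  rw [hmap, map_ne_zero_iff _ (IsFractionRing.injective _ RF2)]
  intro h
  have h₁ := congrArg (MvPolynomial.eval fun _ => (1 : ℚ)) h
  simp only [map_bivariateFib, MvPolynomial.eval_X, map_zero, bivariateFib_one_one,
    Nat.cast_eq_zero] at h₁
  exact Nat.fib_pos.mpr (Nat.pos_of_ne_zero hn) |>.ne' h₁

/-- F_{sn}³ = F_s³ · ( C(n+2,3)_{F_s} + 2(−y)^s L_s C(n+1,3)_{F_s} + (−y)^{3s} C(n,3)_{F_s} ). -/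
theorem fib_cube_as_fibopolynomials (s n : ℕ) (hs : 1 ≤ s) :
    bF Xv Yv (s * n) ^ 3 =
      bF Xv Yv s ^ 3 *
        (fibo Xv Yv s (n + 2) 3 + 2 * (-Yv) ^ s * bL Xv Yv s * fibo Xv Yv s (n + 1) 3 +
          (-Yv) ^ (3 * s) * fibo Xv Yv s n 3) :=
  bF_mul_cube Xv Yv s n <| mul_ne_zero
    (mul_ne_zero (bF_Xv_Yv_ne_zero (by omega)) (bF_Xv_Yv_ne_zero (by omega)))
    (bF_Xv_Yv_ne_zero (by omega))
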